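/- Let (V,Y,1,s) be an H-module vertex algebra where H = kG is the group Hopf algebra of a finite subgroup G of Aut(V), and let H* be the dual Hopf algebra with basis {ρ_g}. Then: (i) V#H is a left H*-module via ρ_h(a#g) = δ_{h,g}·a#g for a ∈ V, g,h ∈ G; (ii) for all f ∈ H* and u#g, v#h ∈ V#H, f(Y^{V#H}(u#g,z)(v#h)) = Σ Y^{V#H}(f_1(u#g),z)(f_2(v#h)) where Δ(f) = Σ f_1⊗f_2. Consequently V#H is an H*-module S-local vertex algebra. -/

import Mathlib

open scoped TensorProduct DirectSum

namespace HopfVA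

/-- Generalized binomial coefficient `C(r, j)` for an integer `r` (exact division). -/
def ibinom (r : ℤ) (j : ℕ) : ℤ := (∏ i ∈ Finset.range j, (r - (i : ℤ))) / (j.factorial : ℤ)

/-- `(-1)^q` for an integer exponent `q`. -/
def negOnePow (q : ℤ) : ℤ := if Even q then 1 else -1

section Core

variable {k : Type*} [CommRing k] {V : Type*} [AddCommGroup V] [Module k V]

/-- If `f p q` is the coefficient of `z^p w^q` of a two-variable formal distribution,
then `zwMul n f p q` is the coefficient of `z^p w^q` of `(z-w)^n` times that distribution. -/
def zwMul (n : ℕ) (f : ℤ → ℤ → V) : ℤ → ℤ → V := fun p q =>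
  ∑ i ∈ Finset.range (n + 1),
    ((-1 : ℤ) ^ i * (n.choose i : ℤ)) • f (p - ((n : ℤ) - (i : ℤ))) (q - (i : ℤ))

/-- The data of a state-field correspondence on a pointed vector space:
`Y a n b` is the `n`-th product `a_n b` (so that `Y(a,z)b = ∑ (a_n b) z^{-n-1}`),
`vac` is the vacuum vector and `T` is the translation operator. -/
structure VAData (k V : Type*) [CommRing k] [AddCommGroup V] [Module k V] where
  Y : V →ₗ[k] ℤ → Module.End k V
  vac : V
  T : Module.End k V

namespace VAData

variable (F : VAData k V)

/-- coefficient of `z^p w^q` in `Y(a,z)Y(b,w)c`. -/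
def prodZW (a b c : V) : ℤ → ℤ → V := fun p q => F.Y a (-p - 1) (F.Y b (-q - 1) c)

/-- coefficient of `z^p w^q` in `Y(b,w)Y(a,z)c`. -/
def prodWZ (a b c : V) : ℤ → ℤ → V := fun p q => F.Y b (-q - 1) (F.Y a (-p - 1) c)

/-- coefficient of `z^p w^q` in `i_{z,w} Y(a,z-w)Y(b,-w)c`. -/
noncomputable def compLHS (a b c : V) : ℤ → ℤ → V := fun p q =>
  negOnePow q •
    ∑ᶠ j : ℕ, ibinom (p + (j : ℤ)) j • F.Y a (-p - 1 - (j : ℤ)) (F.Y b ((j : ℤ) - 1 - q) c)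

/-- Truncated (at `j < J`) version of `compLHS`, for `h`-adic statements. -/
def compLHStr (J : ℕ) (a b c : V) : ℤ → ℤ → V := fun p q =>
  negOnePow q •
    ∑ j ∈ Finset.range J, ibinom (p + (j : ℤ)) j • F.Y a (-p - 1 - (j : ℤ)) (F.Y b ((j : ℤ) - 1 - q) c)

/-- coefficient of `z^p w^q` in `Y(Y(a,z)b,-w)c`. -/
def compRHS (a b c : V) : ℤ → ℤ → V := fun p q =>
  negOnePow q • F.Y (F.Y a (-p - 1) b) (-q - 1) c

/-- The axioms of a state-field correspondence: truncation, the vacuum axioms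
`Y(1,z)a = a`, `Y(a,z)1 = a + (Ta)z + ⋯ ∈ V[[z]]`, and translation covariance
`[T, Y(a,z)] = Y(Ta,z) = ∂_z Y(a,z)`. -/
def IsStateField : Prop :=
  (∀ a b : V, ∃ N : ℤ, ∀ n : ℤ, N ≤ n → F.Y a n b = 0) ∧
  (∀ (a : V) (n : ℤ), F.Y F.vac n a = if n = -1 then a else 0) ∧
  (∀ (a : V) (n : ℤ), 0 ≤ n → F.Y a n F.vac = 0) ∧
  (∀ a : V, F.Y a (-1) F.vac = a) ∧
  (∀ a : V, F.Y a (-2) F.vac = F.T a) ∧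
  (∀ (a b : V) (n : ℤ), F.Y (F.T a) n b = F.T (F.Y a n b) - F.Y a n (F.T b)) ∧
  (∀ (a b : V) (n : ℤ), F.Y (F.T a) n b = (-n : ℤ) • F.Y a (n - 1) b)

/-- The associativity relation
`(z-w)^N i_{z,w} Y(a,z-w)Y(b,-w)c = (z-w)^N Y(Y(a,z)b,-w)c`. -/
def IsAssocFA : Prop := ∀ a b c : V, ∃ N : ℕ, ∀ p q : ℤ,
  zwMul N (F.compLHS a b c) p q = zwMul N (F.compRHS a b c) p q

/-- A field algebra is a state-field correspondence satisfying associativity. -/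
def IsFieldAlgebra : Prop := F.IsStateField ∧ F.IsAssocFA

/-- `(z-w)^n [Y(a,z), Y(b,w)] = 0`. -/
def IsLocalPair (a b : V) : Prop :=
  ∃ n : ℕ, ∀ (c : V) (p q : ℤ), zwMul n (F.prodZW a b c) p q = zwMul n (F.prodWZ a b c) p q

/-- A vertex algebra is a field algebra all of whose pairs of fields are local. -/
def IsVertexAlgebra : Prop := F.IsFieldAlgebra ∧ ∀ a b : V, F.IsLocalPair a b

/-- `(z-w)^n Y(a,z)Y(b,w) = (z-w)^n ∑ᵢ Y(bⁱ,w)Y(aⁱ,z)`. -/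
def IsSLocalPair (a b : V) : Prop :=
  ∃ (n m : ℕ) (A B : Fin m → V), ∀ (c : V) (p q : ℤ),
    zwMul n (F.prodZW a b c) p q = ∑ i, zwMul n (F.prodWZ (A i) (B i) c) p q

/-- An `S`-local vertex algebra is a field algebra all of whose pairs of fields
are `S`-local. -/
def IsSLocalVA : Prop := F.IsFieldAlgebra ∧ ∀ a b : V, F.IsSLocalPair a b

end VAData

/-- Data of a module over a field algebra: the module fields `Y^M` and translation `sM`. -/
structure VModData (k V M : Type*) [CommRing k] [AddCommGroup V] [Module k V]
    [AddCommGroup M] [Module k M] where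
  YM : V →ₗ[k] ℤ → Module.End k M
  sM : Module.End k M

namespace VModData

variable {M : Type*} [AddCommGroup M] [Module k M]

/-- coefficient of `z^p w^q` in `Y^M(a,z)Y^M(b,w)x`. -/
def mprodZW (Mo : VModData k V M) (a b : V) (x : M) : ℤ → ℤ → M := fun p q =>
  Mo.YM a (-p - 1) (Mo.YM b (-q - 1) x)

/-- coefficient of `z^p w^q` in `Y^M(b,w)Y^M(a,z)x`. -/
def mprodWZ (Mo : VModData k V M) (a b : V) (x : M) : ℤ → ℤ → M := fun p q =>
  Mo.YM b (-q - 1) (Mo.YM a (-p - 1) x)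

/-- coefficient of `z^p w^q` in `i_{z,w} Y^M(a,z-w)Y^M(b,-w)x`. -/
noncomputable def mcompLHS (Mo : VModData k V M) (a b : V) (x : M) : ℤ → ℤ → M := fun p q =>
  negOnePow q •
    ∑ᶠ j : ℕ, ibinom (p + (j : ℤ)) j • Mo.YM a (-p - 1 - (j : ℤ)) (Mo.YM b ((j : ℤ) - 1 - q) x)

/-- coefficient of `z^p w^q` in `Y^M(Y(a,z)b,-w)x`. -/
def mcompRHS (F : VAData k V) (Mo : VModData k V M) (a b : V) (x : M) : ℤ → ℤ → M := fun p q =>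
  negOnePow q • Mo.YM (F.Y a (-p - 1) b) (-q - 1) x

/-- `M` is a left module over the field algebra `F`: truncation, vacuum, translation
invariance and the associativity axiom. -/
def IsModule (F : VAData k V) (Mo : VModData k V M) : Prop :=
  (∀ (a : V) (x : M), ∃ N : ℤ, ∀ n : ℤ, N ≤ n → Mo.YM a n x = 0) ∧
  (∀ (x : M) (n : ℤ), Mo.YM F.vac n x = if n = -1 then x else 0) ∧
  (∀ (a : V) (x : M) (n : ℤ),
      Mo.sM (Mo.YM a n x) - Mo.YM a n (Mo.sM x) = (-n : ℤ) • Mo.YM a (n - 1) x) ∧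
  (∀ (a b : V) (x : M), ∃ N : ℕ, ∀ p q : ℤ,
      zwMul N (mcompLHS Mo a b x) p q = zwMul N (mcompRHS F Mo a b x) p q)

/-- Locality of the module fields `Y^M(a,z)`, `Y^M(b,w)`. -/
def IsLocalModPair (Mo : VModData k V M) (a b : V) : Prop :=
  ∃ n : ℕ, ∀ (x : M) (p q : ℤ),
    zwMul n (mprodZW Mo a b x) p q = zwMul n (mprodWZ Mo a b x) p q

/-- `S`-locality of the module fields. -/
def IsSLocalModPair (Mo : VModData k V M) (a b : V) : Prop :=
  ∃ (n m : ℕ) (A B : Fin m → V), ∀ (x : M) (p q : ℤ),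
    zwMul n (mprodZW Mo a b x) p q = ∑ i, zwMul n (mprodWZ Mo (A i) (B i) x) p q

end VModData

/-- The `f`-product `a_(f) b = Res_z f(z) Y(a,z) b`, where `f n` is the coefficient
of `z^n` in `f`. -/
noncomputable def fProduct (F : VAData k V) (f : ℤ → k) (a b : V) : V :=
  ∑ᶠ n : ℤ, f n • F.Y a n b

/-- Coefficients of the formal derivative `∂_z f`. -/
def derivCoef (f : ℤ → k) : ℤ → k := fun n => ((n : ℤ) + 1 : ℤ) • f (n + 1)

/-- The subspace `V_(g) V` spanned by all products `a_(g) b` with `g = ∂_z f`. -/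
noncomputable def gSpan (F : VAData k V) (f : ℤ → k) : Submodule k V :=
  Submodule.span k {x : V | ∃ a b : V, x = fProduct F (derivCoef f) a b}

/-- `x ≡ y mod h^M`, where `h = r`. -/
def ModH (r : k) (M : ℕ) (x y : V) : Prop := ∃ v : V, x - y = r ^ M • v

/-- An automorphism of the (state-field data of a) vertex algebra `F`. -/
def IsVAAut (F : VAData k V) (φ : V ≃ₗ[k] V) : Prop :=
  φ F.vac = F.vac ∧ (∀ v : V, φ (F.T v) = F.T (φ v)) ∧
  ∀ (a b : V) (n : ℤ), φ (F.Y a n b) = F.Y (φ a) n (φ b)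

end Core

/-- The coefficients of `f(z) = z⁻¹`. -/
def zinvCoef (k : Type*) [CommRing k] : ℤ → k := fun n => if n = -1 then 1 else 0

/-- The coefficients of `f(z) = c·e^{cz}/(e^{cz}-1)
  = z⁻¹ + c + ∑_{m≥1} B_m c^m z^{m-1}/m!` (Bernoulli numbers `B_m`). -/
noncomputable def berCoef {k : Type*} [Field k] [CharZero k] (c : k) : ℤ → k := fun n =>
  if n < -1 then 0
  else ((bernoulli (n + 1).toNat : ℚ) • (c ^ (n + 1).toNat)) / ((n + 1).toNat.factorial : k)
        + (if n = 0 then c else 0)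

/-- `f(z) = z⁻¹` or `f(z) = c·e^{cz}/(e^{cz}-1)` with `c ≠ 0`. -/
def AdmissibleF {k : Type*} [Field k] [CharZero k] (f : ℤ → k) : Prop :=
  f = zinvCoef k ∨ ∃ c : k, c ≠ 0 ∧ f = berCoef c

section HopfDefs

variable {k : Type*} [CommRing k] {V : Type*} [AddCommGroup V] [Module k V]
variable (H : Type*) [Ring H] [HopfAlgebra k H]

/-- `V` is an `H`-module field algebra: `h·1 = ε(h)1`, `h(Ta) = T(ha)` and
`h(aₙb) = ∑ (h₁a)ₙ(h₂b)` (the last condition quantified over all finite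
representations of `Δ(h)`). -/
def IsHModuleFA [Module H V] [IsScalarTower k H V] (F : VAData k V) : Prop :=
  (∀ h : H, h • F.vac = (Coalgebra.counit (R := k) h) • F.vac) ∧
  (∀ (h : H) (a : V), h • (F.T a : V) = F.T (h • a)) ∧
  (∀ (h : H) (a b : V) (n : ℤ) (m : ℕ) (h1 h2 : Fin m → H),
      Coalgebra.comul (R := k) h = ∑ i, h1 i ⊗ₜ[k] h2 i →
      h • (F.Y a n b : V) = ∑ i, F.Y (h1 i • a) n (h2 i • b))

/-- The smash product structure `V # H` on `V ⊗ H`: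
`Y(a#h,z)(b#g) = ∑ Y(a,z)(h₁b) # h₂g`, vacuum `1#1`, translation `T#1`. -/
def SmashChar [Module H V] [IsScalarTower k H V] (F : VAData k V)
    (FS : VAData k (V ⊗[k] H)) : Prop :=
  (∀ (a b : V) (h g : H) (n : ℤ) (m : ℕ) (h1 h2 : Fin m → H),
      Coalgebra.comul (R := k) h = ∑ i, h1 i ⊗ₜ[k] h2 i →
      FS.Y (a ⊗ₜ[k] h) n (b ⊗ₜ[k] g) = ∑ i, (F.Y a n (h1 i • b) : V) ⊗ₜ[k] (h2 i * g)) ∧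
  (FS.vac = F.vac ⊗ₜ[k] (1 : H)) ∧
  (∀ (a : V) (h : H), FS.T (a ⊗ₜ[k] h) = (F.T a : V) ⊗ₜ[k] h)

end HopfDefs

/-- The fixed point subspace `V^H = {v | h v = ε(h) v for all h}`. -/
def hFixed (k V H : Type*) [CommRing k] [AddCommGroup V] [Module k V]
    [Ring H] [HopfAlgebra k H] [Module H V] [IsScalarTower k H V]
    [SMulCommClass k H V] : Submodule k V where
  carrier := {v : V | ∀ h : H, h • v = (Coalgebra.counit (R := k) h) • v}
  add_mem' := by
    intro a b ha hb h
    rw [smul_add, ha h, hb h, ← smul_add]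
  zero_mem' := by
    intro h
    simp
  smul_mem' := by
    intro c v hv h
    rw [← smul_comm c h v, hv h, smul_smul, smul_smul, mul_comm]

end HopfVA

namespace HopfVA

section ZW
variable {k : Type*} [CommRing k] {V : Type*} [AddCommGroup V] [Module k V]
variable {W : Type*} [AddCommGroup W] [Module k W]

lemma zwMul_succ (n : ℕ) (f : ℤ → ℤ → V) (p q : ℤ) :
    zwMul (n+1) f p q = zwMul n f (p-1) q - zwMul n f p (q-1) := by
  have e1 : zwMul (n+1) f p q
      = (∑ i ∈ Finset.range (n+1),
          ((-1:ℤ)^(i+1) * ((n+1).choose (i+1) : ℤ)) • f (p - ((n:ℤ)+1) + (i+1)) (q - (i+1)))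
        + f (p - ((n:ℤ)+1)) q := by
    rw [zwMul, Finset.sum_range_succ']
    congr 1
    · refine Finset.sum_congr rfl fun i _ => ?_
      have h1 : p - (((n:ℕ)+1 : ℕ) - ((i:ℕ)+1 : ℕ) : ℤ) = p - ((n:ℤ)+1) + (i+1) := by
        push_cast; ring
      rw [h1]; norm_cast
    · norm_num
  have e2 : zwMul n f (p-1) q
      = (∑ i ∈ Finset.range n,
          ((-1:ℤ)^(i+1) * (n.choose (i+1) : ℤ)) • f (p - ((n:ℤ)+1) + (i+1)) (q - (i+1)))
        + f (p - ((n:ℤ)+1)) q := by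
    rw [zwMul, Finset.sum_range_succ']
    congr 1
    · refine Finset.sum_congr rfl fun i _ => ?_
      have h1 : p - 1 - ((n:ℤ) - ((i:ℕ)+1 : ℕ)) = p - ((n:ℤ)+1) + (i+1) := by
        push_cast; ring
      rw [h1]; norm_cast
    · norm_num
      have h1 : p - 1 - (n:ℤ) = p - ((n:ℤ)+1) := by ring
      rw [h1]
  have e2' : zwMul n f (p-1) q
      = (∑ i ∈ Finset.range (n+1),
          ((-1:ℤ)^(i+1) * (n.choose (i+1) : ℤ)) • f (p - ((n:ℤ)+1) + (i+1)) (q - (i+1)))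
        + f (p - ((n:ℤ)+1)) q := by
    rw [e2, Finset.sum_range_succ, Nat.choose_succ_self]
    norm_num
  have e3 : zwMul n f p (q-1)
      = ∑ i ∈ Finset.range (n+1),
          ((-1:ℤ)^i * (n.choose i : ℤ)) • f (p - ((n:ℤ)+1) + (i+1)) (q - (i+1)) := by
    rw [zwMul]
    refine Finset.sum_congr rfl fun i _ => ?_
    have h1 : p - ((n:ℤ) - i) = p - ((n:ℤ)+1) + (i+1) := by ring
    have h2 : q - 1 - (i:ℤ) = q - ((i:ℕ)+1 : ℕ) := by push_cast; ring
    rw [h1, h2]; norm_cast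
  rw [e1, e2', e3]
  have key : (∑ i ∈ Finset.range (n+1),
      ((-1:ℤ)^(i+1) * ((n+1).choose (i+1) : ℤ)) • f (p - ((n:ℤ)+1) + (i+1)) (q - (i+1)))
    = (∑ i ∈ Finset.range (n+1),
        ((-1:ℤ)^(i+1) * (n.choose (i+1) : ℤ)) • f (p - ((n:ℤ)+1) + (i+1)) (q - (i+1)))
      - ∑ i ∈ Finset.range (n+1),
        ((-1:ℤ)^i * (n.choose i : ℤ)) • f (p - ((n:ℤ)+1) + (i+1)) (q - (i+1)) := by
    rw [← Finset.sum_sub_distrib]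
    refine Finset.sum_congr rfl fun i _ => ?_
    rw [← sub_smul]
    congr 1
    rw [Nat.choose_succ_succ]
    push_cast
    ring
  rw [key]
  abel

lemma zwMul_congr_of_le {f g : ℤ → ℤ → V} {n N : ℕ} (h : n ≤ N)
    (hfg : ∀ p q, zwMul n f p q = zwMul n g p q) : ∀ p q, zwMul N f p q = zwMul N g p q := by
  induction N, h using Nat.le_induction with
  | base => exact hfg
  | succ N hN ih => intro p q; rw [zwMul_succ, zwMul_succ, ih, ih]

lemma zwMul_add (n : ℕ) (f g : ℤ → ℤ → V) (p q : ℤ) :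
    zwMul n (fun p q => f p q + g p q) p q = zwMul n f p q + zwMul n g p q := by
  simp [zwMul, smul_add, Finset.sum_add_distrib]

lemma zwMul_map (φ : V →ₗ[k] W) (n : ℕ) (f : ℤ → ℤ → V) (p q : ℤ) :
    zwMul n (fun p q => φ (f p q)) p q = φ (zwMul n f p q) := by
  simp [zwMul, map_sum, map_zsmul]

lemma zwMul_sum {ι : Type*} (s : Finset ι) (n : ℕ) (h : ι → ℤ → ℤ → V) (p q : ℤ) :
    zwMul n (fun p q => ∑ i ∈ s, h i p q) p q = ∑ i ∈ s, zwMul n (h i) p q := by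
  simp [zwMul, Finset.smul_sum]
  exact Finset.sum_comm

lemma zwMul_zero_fn {f : ℤ → ℤ → V} (hf : ∀ p q, f p q = 0) (n : ℕ) (p q : ℤ) :
    zwMul n f p q = 0 := by
  simp [zwMul, hf]

lemma zwEq_add {f₁ f₂ g₁ g₂ : ℤ → ℤ → V}
    (h₁ : ∃ N, ∀ p q, zwMul N f₁ p q = zwMul N g₁ p q)
    (h₂ : ∃ N, ∀ p q, zwMul N f₂ p q = zwMul N g₂ p q) :
    ∃ N, ∀ p q, zwMul N (fun p q => f₁ p q + f₂ p q) p q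
      = zwMul N (fun p q => g₁ p q + g₂ p q) p q := by
  obtain ⟨N₁, hN₁⟩ := h₁
  obtain ⟨N₂, hN₂⟩ := h₂
  refine ⟨max N₁ N₂, fun p q => ?_⟩
  rw [zwMul_add, zwMul_add,
    zwMul_congr_of_le (le_max_left N₁ N₂) hN₁ p q,
    zwMul_congr_of_le (le_max_right N₁ N₂) hN₂ p q]

lemma zwEq_congr_le {m : ℕ} {f : ℤ → ℤ → V} {gs : Fin m → (ℤ → ℤ → V)} {n N : ℕ} (h : n ≤ N)
    (he : ∀ p q, zwMul n f p q = ∑ i, zwMul n (gs i) p q) :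
    ∀ p q, zwMul N f p q = ∑ i, zwMul N (gs i) p q := by
  have h2 : ∀ p q, zwMul N f p q = zwMul N (fun p q => ∑ i, gs i p q) p q := by
    refine zwMul_congr_of_le h (fun p q => ?_)
    rw [he p q, zwMul_sum]
  intro p q
  rw [h2 p q, zwMul_sum]

end ZW

section Smash
variable {k : Type*} [CommRing k] {V : Type*} [AddCommGroup V] [Module k V]
variable {G : Type*} [Group G] [DecidableEq G]

/-- The basic pure-tensor endomorphism of the smash product. -/
noncomputable def smashE (F : VAData k V) (ρ : G →* (V ≃ₗ[k] V)) (a : V) (g : G) (n : ℤ) :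
    Module.End k (V ⊗[k] MonoidAlgebra k G) :=
  TensorProduct.map ((F.Y a n) ∘ₗ (ρ g : V ≃ₗ[k] V).toLinearMap)
    (LinearMap.mulLeft k (MonoidAlgebra.single g 1))

lemma smashE_add (F : VAData k V) (ρ : G →* (V ≃ₗ[k] V)) (a a' : V) (g : G) (n : ℤ) :
    smashE F ρ (a + a') g n = smashE F ρ a g n + smashE F ρ a' g n := by
  simp only [smashE, map_add, Pi.add_apply, LinearMap.add_comp, TensorProduct.map_add_left]

lemma smashE_smul (F : VAData k V) (ρ : G →* (V ≃ₗ[k] V)) (c : k) (a : V) (g : G) (n : ℤ) :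
    smashE F ρ (c • a) g n = c • smashE F ρ a g n := by
  simp only [smashE, map_smul, Pi.smul_apply, LinearMap.smul_comp, TensorProduct.map_smul_left]

lemma maLhomExt {N : Type*} [AddCommMonoid N] [Module k N] ⦃φ ψ : MonoidAlgebra k G →ₗ[k] N⦄
    (h : ∀ (a : G) (b : k), φ (MonoidAlgebra.single a b) = ψ (MonoidAlgebra.single a b)) :
    φ = ψ :=
  MonoidAlgebra.lhom_ext' fun a => LinearMap.ext fun b => h a b

/-- The bilinear map underlying the smash-product fields. -/
noncomputable def smashB (F : VAData k V) (ρ : G →* (V ≃ₗ[k] V)) :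
    V →ₗ[k] MonoidAlgebra k G →ₗ[k] (ℤ → Module.End k (V ⊗[k] MonoidAlgebra k G)) where
  toFun a := (Finsupp.lsum k fun g => LinearMap.toSpanSingleton k _ (fun n => smashE F ρ a g n))
    ∘ₗ (MonoidAlgebra.coeffLinearEquiv k).toLinearMap
  map_add' a a' := by
    apply maLhomExt
    intro g c
    simp only [LinearMap.add_comp, LinearMap.coe_comp, Function.comp_apply, LinearEquiv.coe_coe, MonoidAlgebra.coeffLinearEquiv_apply, MonoidAlgebra.coeff_single, Finsupp.lsum_single, LinearMap.toSpanSingleton_apply, LinearMap.add_apply]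
    funext n
    simp only [Pi.smul_apply, Pi.add_apply, smashE_add, smul_add]
  map_smul' c a := by
    apply maLhomExt
    intro g d
    simp only [LinearMap.smul_comp, LinearMap.coe_comp, Function.comp_apply, LinearEquiv.coe_coe, MonoidAlgebra.coeffLinearEquiv_apply, MonoidAlgebra.coeff_single, Finsupp.lsum_single, LinearMap.toSpanSingleton_apply, RingHom.id_apply,
      LinearMap.smul_apply]
    funext n
    simp only [Pi.smul_apply, smashE_smul, smul_comm c d]

/-- The smash product `V # kG`. -/
noncomputable def smashFS (F : VAData k V) (ρ : G →* (V ≃ₗ[k] V)) :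
    VAData k (V ⊗[k] MonoidAlgebra k G) where
  Y := TensorProduct.lift (smashB F ρ)
  vac := F.vac ⊗ₜ (1 : MonoidAlgebra k G)
  T := TensorProduct.map F.T LinearMap.id

variable (F : VAData k V) (ρ : G →* (V ≃ₗ[k] V))

lemma smashY_tmul (a b : V) (g h : G) (c d : k) (n : ℤ) :
    (smashFS F ρ).Y (a ⊗ₜ MonoidAlgebra.single g c) n (b ⊗ₜ MonoidAlgebra.single h d)
      = F.Y a n (ρ g b) ⊗ₜ MonoidAlgebra.single (g * h) (c * d) := by
  show TensorProduct.lift (smashB F ρ) (a ⊗ₜ MonoidAlgebra.single g c) n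
      (b ⊗ₜ MonoidAlgebra.single h d) = _
  rw [TensorProduct.lift.tmul]
  simp only [smashB, LinearMap.coe_mk, AddHom.coe_mk, LinearMap.coe_comp, Function.comp_apply, LinearEquiv.coe_coe, MonoidAlgebra.coeffLinearEquiv_apply, MonoidAlgebra.coeff_single]
  erw [Finsupp.lsum_single]
  simp only [Finsupp.lsum_single, LinearMap.toSpanSingleton_apply, Pi.smul_apply,
    LinearMap.smul_apply, smashE, TensorProduct.map_tmul, LinearMap.coe_comp,
    Function.comp_apply, LinearEquiv.coe_coe, LinearMap.mulLeft_apply,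
    MonoidAlgebra.single_mul_single, one_mul]
  rw [← TensorProduct.tmul_smul, MonoidAlgebra.smul_single, smul_eq_mul]

lemma smash_T_tmul (a : V) (x : MonoidAlgebra k G) :
    (smashFS F ρ).T (a ⊗ₜ x) = (F.T a) ⊗ₜ x := rfl

/-- Induction principle on `V ⊗ kG` by pure tensors against singles. -/
lemma tensorInd {P : V ⊗[k] MonoidAlgebra k G → Prop} (h0 : P 0)
    (hadd : ∀ x y, P x → P y → P (x + y))
    (hp : ∀ (v : V) (g : G) (c : k), P (v ⊗ₜ MonoidAlgebra.single g c)) : ∀ x, P x := by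
  intro x
  induction x using TensorProduct.induction_on with
  | zero => exact h0
  | tmul v y =>
    induction y using MonoidAlgebra.induction_linear with
    | zero => simpa using h0
    | add f g hf hg => rw [TensorProduct.tmul_add]; exact hadd _ _ hf hg
    | single a b => exact hp v a b
  | add x y hx hy => exact hadd x y hx hy

end Smash

section SmashMain
set_option linter.unusedSectionVars false
variable {k : Type*} [CommRing k] {V : Type*} [AddCommGroup V] [Module k V]
variable {G : Type*} [Group G] [DecidableEq G]
variable (F : VAData k V) (ρ : G →* (V ≃ₗ[k] V))

lemma suppfin_of_trunc {W : Type*} [AddCommGroup W] {N q : ℤ} (t : ℕ → W)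
    (h : ∀ j : ℕ, N ≤ (j : ℤ) - 1 - q → t j = 0) : (Function.support t).Finite := by
  apply Set.Finite.subset (Finset.range (N + 1 + q).toNat).finite_toSet
  intro j hj
  simp only [Function.mem_support] at hj
  simp only [Finset.coe_range, Set.mem_Iio]
  by_contra hlt
  push_neg at hlt
  have h2 : N + 1 + q ≤ (j : ℤ) := Int.toNat_le.mp hlt
  exact hj (h j (by omega))

lemma tmul_zsmul (m : ℤ) (x : V) (t : MonoidAlgebra k G) :
    (m • x) ⊗ₜ[k] t = m • (x ⊗ₜ[k] t) :=
  map_zsmul ((TensorProduct.mk k V (MonoidAlgebra k G)).flip t) m x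

lemma smash_vac_def : (smashFS F ρ).vac = F.vac ⊗ₜ MonoidAlgebra.single (1 : G) (1 : k) := by
  rw [show (smashFS F ρ).vac = F.vac ⊗ₜ (1 : MonoidAlgebra k G) from rfl, MonoidAlgebra.one_def]

lemma smash_trunc (htr : ∀ a b : V, ∃ N : ℤ, ∀ n, N ≤ n → F.Y a n b = 0) :
    ∀ a b : V ⊗[k] MonoidAlgebra k G, ∃ N : ℤ, ∀ n, N ≤ n → (smashFS F ρ).Y a n b = 0 := by
  intro a
  induction a using tensorInd with
  | h0 => exact fun b => ⟨0, fun n _ => by simp⟩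
  | hadd x y hx hy =>
    intro b
    obtain ⟨N₁, h₁⟩ := hx b
    obtain ⟨N₂, h₂⟩ := hy b
    refine ⟨max N₁ N₂, fun n hn => ?_⟩
    rw [map_add]
    show (smashFS F ρ).Y x n b + (smashFS F ρ).Y y n b = 0
    rw [h₁ n (le_trans (le_max_left _ _) hn), h₂ n (le_trans (le_max_right _ _) hn), add_zero]
  | hp u g c =>
    intro b
    induction b using tensorInd with
    | h0 => exact ⟨0, fun n _ => map_zero _⟩
    | hadd x y hx hy =>
      obtain ⟨N₁, h₁⟩ := hx
      obtain ⟨N₂, h₂⟩ := hy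
      refine ⟨max N₁ N₂, fun n hn => ?_⟩
      rw [map_add, h₁ n (le_trans (le_max_left _ _) hn),
        h₂ n (le_trans (le_max_right _ _) hn), add_zero]
    | hp v h d =>
      obtain ⟨N, hN⟩ := htr u (ρ g v)
      exact ⟨N, fun n hn => by rw [smashY_tmul, hN n hn, TensorProduct.zero_tmul]⟩

lemma smashY_smashY (haut : ∀ g : G, IsVAAut F (ρ g)) (a b w : V) (g h l : G) (c d e : k)
    (m n : ℤ) :
    (smashFS F ρ).Y (a ⊗ₜ MonoidAlgebra.single g c) m
        ((smashFS F ρ).Y (b ⊗ₜ MonoidAlgebra.single h d) n (w ⊗ₜ MonoidAlgebra.single l e))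
      = F.Y a m (F.Y (ρ g b) n (ρ (g * h) w)) ⊗ₜ MonoidAlgebra.single (g * h * l) (c * d * e) := by
  have hw : (ρ g) ((ρ h) w) = (ρ (g * h)) w := by rw [map_mul]; rfl
  rw [smashY_tmul, smashY_tmul, (haut g).2.2, hw, ← mul_assoc, ← mul_assoc]

lemma smash_isStateField (hSF : F.IsStateField) (haut : ∀ g : G, IsVAAut F (ρ g)) :
    (smashFS F ρ).IsStateField := by
  obtain ⟨htr, hvacf, hvac0, hvac1, hvac2, hT1, hT2⟩ := hSF
  refine ⟨smash_trunc F ρ htr, ?_, ?_, ?_, ?_, ?_, ?_⟩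
  · intro x n
    induction x using tensorInd with
    | h0 => by_cases hn : n = -1 <;> simp [hn]
    | hadd x y hx hy =>
      rw [map_add, hx, hy]
      by_cases hn : n = -1 <;> simp [hn]
    | hp v h d =>
      have hρ : (ρ (1 : G)) v = v := by rw [map_one]; rfl
      rw [smash_vac_def, smashY_tmul, hρ, hvacf, one_mul, one_mul]
      split_ifs <;> simp
  · intro a n hn
    induction a using tensorInd with
    | h0 => simp
    | hadd x y hx hy =>
      rw [map_add]
      show (smashFS F ρ).Y x n _ + (smashFS F ρ).Y y n _ = 0
      rw [hx, hy, add_zero]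
    | hp u g c =>
      rw [smash_vac_def, smashY_tmul, (haut g).1, hvac0 u n hn, TensorProduct.zero_tmul]
  · intro a
    induction a using tensorInd with
    | h0 => simp
    | hadd x y hx hy =>
      rw [map_add]
      show (smashFS F ρ).Y x (-1) _ + (smashFS F ρ).Y y (-1) _ = x + y
      rw [hx, hy]
    | hp u g c =>
      rw [smash_vac_def, smashY_tmul, (haut g).1, hvac1, mul_one, mul_one]
  · intro a
    induction a using tensorInd with
    | h0 => simp
    | hadd x y hx hy =>
      rw [map_add]
      show (smashFS F ρ).Y x (-2) _ + (smashFS F ρ).Y y (-2) _ = (smashFS F ρ).T (x + y)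
      rw [hx, hy, map_add]
    | hp u g c =>
      rw [smash_vac_def, smashY_tmul, (haut g).1, hvac2, mul_one, mul_one, smash_T_tmul]
  · intro a b n
    induction a using tensorInd with
    | h0 => simp
    | hadd x y hx hy =>
      simp only [map_add, Pi.add_apply, LinearMap.add_apply, hx, hy]
      abel
    | hp u g c =>
      induction b using tensorInd with
      | h0 => simp
      | hadd x y hx hy =>
        simp only [map_add, Pi.add_apply, LinearMap.add_apply, hx, hy]
        abel
      | hp v h d =>
        rw [smash_T_tmul, smash_T_tmul, smashY_tmul, smashY_tmul, smashY_tmul,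
          (haut g).2.1, hT1, smash_T_tmul, TensorProduct.sub_tmul]
  · intro a b n
    induction a using tensorInd with
    | h0 => simp
    | hadd x y hx hy =>
      simp only [map_add, Pi.add_apply, LinearMap.add_apply, hx, hy]
      rw [smul_add]
    | hp u g c =>
      induction b using tensorInd with
      | h0 => simp
      | hadd x y hx hy =>
        simp only [map_add, Pi.add_apply, LinearMap.add_apply, hx, hy]
        rw [smul_add]
      | hp v h d =>
        rw [smash_T_tmul, smashY_tmul, smashY_tmul, hT2, tmul_zsmul]

end SmashMain

section SmashAssoc
set_option linter.unusedSectionVars false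
variable {k : Type*} [CommRing k] {V : Type*} [AddCommGroup V] [Module k V]
variable {G : Type*} [Group G] [DecidableEq G]
variable (F : VAData k V) (ρ : G →* (V ≃ₗ[k] V))

lemma lmap_finsum {V' W : Type*} [AddCommGroup V'] [Module k V'] [AddCommGroup W] [Module k W]
    (φ : V' →ₗ[k] W) {f : ℕ → V'} (hf : (Function.support f).Finite) :
    φ (∑ᶠ j, f j) = ∑ᶠ j, φ (f j) :=
  φ.toAddMonoidHom.map_finsum hf

lemma suppLHS (htrS : ∀ a b : V ⊗[k] MonoidAlgebra k G, ∃ N : ℤ, ∀ n, N ≤ n →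
      (smashFS F ρ).Y a n b = 0)
    (a b c : V ⊗[k] MonoidAlgebra k G) (p q : ℤ) :
    (Function.support fun j : ℕ => ibinom (p + j) j •
      (smashFS F ρ).Y a (-p - 1 - (j : ℤ)) ((smashFS F ρ).Y b ((j : ℤ) - 1 - q) c)).Finite := by
  obtain ⟨N, hN⟩ := htrS b c
  refine suppfin_of_trunc (N := N) (q := q) _ fun j hj => ?_
  rw [hN _ hj]
  simp

lemma smash_compLHS_pure
    (htr : ∀ a b : V, ∃ N : ℤ, ∀ n, N ≤ n → F.Y a n b = 0)
    (haut : ∀ g : G, IsVAAut F (ρ g)) (u v w : V) (g h l : G) (c d e : k) (p q : ℤ) :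
    (smashFS F ρ).compLHS (u ⊗ₜ MonoidAlgebra.single g c) (v ⊗ₜ MonoidAlgebra.single h d)
        (w ⊗ₜ MonoidAlgebra.single l e) p q
      = ((TensorProduct.mk k V (MonoidAlgebra k G)).flip
            (MonoidAlgebra.single (g * h * l) (c * d * e)))
          (F.compLHS u (ρ g v) (ρ (g * h) w) p q) := by
  set φ := (TensorProduct.mk k V (MonoidAlgebra k G)).flip
      (MonoidAlgebra.single (g * h * l) (c * d * e)) with hφ
  have hφa : ∀ x : V, φ x = x ⊗ₜ MonoidAlgebra.single (g * h * l) (c * d * e) := fun x => rfl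
  have hsupp : (Function.support fun j : ℕ =>
      ibinom (p + j) j • F.Y u (-p - 1 - (j : ℤ))
        (F.Y (ρ g v) ((j : ℤ) - 1 - q) (ρ (g * h) w))).Finite := by
    obtain ⟨N, hN⟩ := htr (ρ g v) (ρ (g * h) w)
    refine suppfin_of_trunc (N := N) (q := q) _ fun j hj => ?_
    rw [hN _ hj]
    simp
  simp only [VAData.compLHS]
  rw [map_zsmul φ, lmap_finsum φ hsupp]
  congr 1
  refine finsum_congr fun j => ?_
  rw [smashY_smashY F ρ haut, map_zsmul φ, hφa]

lemma smash_compRHS_pure (haut : ∀ g : G, IsVAAut F (ρ g)) (u v w : V) (g h l : G)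
    (c d e : k) (p q : ℤ) :
    (smashFS F ρ).compRHS (u ⊗ₜ MonoidAlgebra.single g c) (v ⊗ₜ MonoidAlgebra.single h d)
        (w ⊗ₜ MonoidAlgebra.single l e) p q
      = ((TensorProduct.mk k V (MonoidAlgebra k G)).flip
            (MonoidAlgebra.single (g * h * l) (c * d * e)))
          (F.compRHS u (ρ g v) (ρ (g * h) w) p q) := by
  set φ := (TensorProduct.mk k V (MonoidAlgebra k G)).flip
      (MonoidAlgebra.single (g * h * l) (c * d * e)) with hφ
  have hφa : ∀ x : V, φ x = x ⊗ₜ MonoidAlgebra.single (g * h * l) (c * d * e) := fun x => rfl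
  simp only [VAData.compRHS]
  rw [smashY_tmul, smashY_tmul, map_zsmul φ, hφa]

lemma compLHS_add₁ (htrS : ∀ a b : V ⊗[k] MonoidAlgebra k G, ∃ N : ℤ, ∀ n, N ≤ n →
      (smashFS F ρ).Y a n b = 0)
    (a a' b c : V ⊗[k] MonoidAlgebra k G) (p q : ℤ) :
    (smashFS F ρ).compLHS (a + a') b c p q
      = (smashFS F ρ).compLHS a b c p q + (smashFS F ρ).compLHS a' b c p q := by
  simp only [VAData.compLHS]
  rw [← smul_add, ← finsum_add_distrib (suppLHS F ρ htrS a b c p q) (suppLHS F ρ htrS a' b c p q)]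
  congr 1
  refine finsum_congr fun j => ?_
  simp only [map_add, Pi.add_apply, LinearMap.add_apply, smul_add]

lemma compLHS_add₂ (htrS : ∀ a b : V ⊗[k] MonoidAlgebra k G, ∃ N : ℤ, ∀ n, N ≤ n →
      (smashFS F ρ).Y a n b = 0)
    (a b b' c : V ⊗[k] MonoidAlgebra k G) (p q : ℤ) :
    (smashFS F ρ).compLHS a (b + b') c p q
      = (smashFS F ρ).compLHS a b c p q + (smashFS F ρ).compLHS a b' c p q := by
  simp only [VAData.compLHS]
  rw [← smul_add, ← finsum_add_distrib (suppLHS F ρ htrS a b c p q) (suppLHS F ρ htrS a b' c p q)]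
  congr 1
  refine finsum_congr fun j => ?_
  simp only [map_add, Pi.add_apply, LinearMap.add_apply, smul_add]

lemma compLHS_add₃ (htrS : ∀ a b : V ⊗[k] MonoidAlgebra k G, ∃ N : ℤ, ∀ n, N ≤ n →
      (smashFS F ρ).Y a n b = 0)
    (a b c c' : V ⊗[k] MonoidAlgebra k G) (p q : ℤ) :
    (smashFS F ρ).compLHS a b (c + c') p q
      = (smashFS F ρ).compLHS a b c p q + (smashFS F ρ).compLHS a b c' p q := by
  simp only [VAData.compLHS]
  rw [← smul_add, ← finsum_add_distrib (suppLHS F ρ htrS a b c p q) (suppLHS F ρ htrS a b c' p q)]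
  congr 1
  refine finsum_congr fun j => ?_
  simp only [map_add, Pi.add_apply, LinearMap.add_apply, smul_add]

lemma compLHS_zero₁ (b c : V ⊗[k] MonoidAlgebra k G) (p q : ℤ) :
    (smashFS F ρ).compLHS 0 b c p q = 0 := by
  simp only [VAData.compLHS, map_zero, Pi.zero_apply, LinearMap.zero_apply, smul_zero,
    finsum_zero]

lemma compLHS_zero₂ (a c : V ⊗[k] MonoidAlgebra k G) (p q : ℤ) :
    (smashFS F ρ).compLHS a 0 c p q = 0 := by
  simp only [VAData.compLHS, map_zero, Pi.zero_apply, LinearMap.zero_apply, smul_zero,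
    finsum_zero]

lemma compLHS_zero₃ (a b : V ⊗[k] MonoidAlgebra k G) (p q : ℤ) :
    (smashFS F ρ).compLHS a b 0 p q = 0 := by
  simp only [VAData.compLHS, map_zero, Pi.zero_apply, LinearMap.zero_apply, smul_zero,
    finsum_zero]

lemma compRHS_add₁ (a a' b c : V ⊗[k] MonoidAlgebra k G) (p q : ℤ) :
    (smashFS F ρ).compRHS (a + a') b c p q
      = (smashFS F ρ).compRHS a b c p q + (smashFS F ρ).compRHS a' b c p q := by
  simp only [VAData.compRHS, map_add, Pi.add_apply, LinearMap.add_apply, smul_add]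

lemma compRHS_add₂ (a b b' c : V ⊗[k] MonoidAlgebra k G) (p q : ℤ) :
    (smashFS F ρ).compRHS a (b + b') c p q
      = (smashFS F ρ).compRHS a b c p q + (smashFS F ρ).compRHS a b' c p q := by
  simp only [VAData.compRHS, map_add, Pi.add_apply, LinearMap.add_apply, smul_add]

lemma compRHS_add₃ (a b c c' : V ⊗[k] MonoidAlgebra k G) (p q : ℤ) :
    (smashFS F ρ).compRHS a b (c + c') p q
      = (smashFS F ρ).compRHS a b c p q + (smashFS F ρ).compRHS a b c' p q := by
  simp only [VAData.compRHS, map_add, Pi.add_apply, LinearMap.add_apply, smul_add]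

lemma compRHS_zero₁ (b c : V ⊗[k] MonoidAlgebra k G) (p q : ℤ) :
    (smashFS F ρ).compRHS 0 b c p q = 0 := by
  simp only [VAData.compRHS, map_zero, Pi.zero_apply, LinearMap.zero_apply, smul_zero]

lemma compRHS_zero₂ (a c : V ⊗[k] MonoidAlgebra k G) (p q : ℤ) :
    (smashFS F ρ).compRHS a 0 c p q = 0 := by
  simp only [VAData.compRHS, map_zero, Pi.zero_apply, LinearMap.zero_apply, smul_zero]

lemma compRHS_zero₃ (a b : V ⊗[k] MonoidAlgebra k G) (p q : ℤ) :
    (smashFS F ρ).compRHS a b 0 p q = 0 := by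
  simp only [VAData.compRHS, map_zero, Pi.zero_apply, LinearMap.zero_apply, smul_zero]

lemma smash_assoc (hF : F.IsVertexAlgebra) (haut : ∀ g : G, IsVAAut F (ρ g)) :
    (smashFS F ρ).IsAssocFA := by
  have htr := hF.1.1.1
  have htrS := smash_trunc F ρ htr
  intro a b cc
  induction a using tensorInd with
  | h0 =>
    exact ⟨0, fun p q => by
      rw [zwMul_zero_fn (compLHS_zero₁ F ρ b cc), zwMul_zero_fn (compRHS_zero₁ F ρ b cc)]⟩
  | hadd x y hx hy =>
    have e1 : (smashFS F ρ).compLHS (x + y) b cc = fun p q =>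
        (smashFS F ρ).compLHS x b cc p q + (smashFS F ρ).compLHS y b cc p q :=
      funext fun p => funext fun q => compLHS_add₁ F ρ htrS x y b cc p q
    have e2 : (smashFS F ρ).compRHS (x + y) b cc = fun p q =>
        (smashFS F ρ).compRHS x b cc p q + (smashFS F ρ).compRHS y b cc p q :=
      funext fun p => funext fun q => compRHS_add₁ F ρ x y b cc p q
    rw [e1, e2]
    exact zwEq_add hx hy
  | hp u g c1 =>
    induction b using tensorInd with
    | h0 =>
      exact ⟨0, fun p q => by
        rw [zwMul_zero_fn (compLHS_zero₂ F ρ _ cc), zwMul_zero_fn (compRHS_zero₂ F ρ _ cc)]⟩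
    | hadd x y hx hy =>
      have e1 : (smashFS F ρ).compLHS (u ⊗ₜ MonoidAlgebra.single g c1) (x + y) cc = fun p q =>
          (smashFS F ρ).compLHS _ x cc p q + (smashFS F ρ).compLHS _ y cc p q :=
        funext fun p => funext fun q => compLHS_add₂ F ρ htrS _ x y cc p q
      have e2 : (smashFS F ρ).compRHS (u ⊗ₜ MonoidAlgebra.single g c1) (x + y) cc = fun p q =>
          (smashFS F ρ).compRHS _ x cc p q + (smashFS F ρ).compRHS _ y cc p q :=
        funext fun p => funext fun q => compRHS_add₂ F ρ _ x y cc p q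
      rw [e1, e2]
      exact zwEq_add hx hy
    | hp v h d =>
      induction cc using tensorInd with
      | h0 =>
        exact ⟨0, fun p q => by
          rw [zwMul_zero_fn (compLHS_zero₃ F ρ _ _), zwMul_zero_fn (compRHS_zero₃ F ρ _ _)]⟩
      | hadd x y hx hy =>
        have e1 : (smashFS F ρ).compLHS (u ⊗ₜ MonoidAlgebra.single g c1)
            (v ⊗ₜ MonoidAlgebra.single h d) (x + y) = fun p q =>
            (smashFS F ρ).compLHS _ _ x p q + (smashFS F ρ).compLHS _ _ y p q :=
          funext fun p => funext fun q => compLHS_add₃ F ρ htrS _ _ x y p q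
        have e2 : (smashFS F ρ).compRHS (u ⊗ₜ MonoidAlgebra.single g c1)
            (v ⊗ₜ MonoidAlgebra.single h d) (x + y) = fun p q =>
            (smashFS F ρ).compRHS _ _ x p q + (smashFS F ρ).compRHS _ _ y p q :=
          funext fun p => funext fun q => compRHS_add₃ F ρ _ _ x y p q
        rw [e1, e2]
        exact zwEq_add hx hy
      | hp w l e =>
        obtain ⟨N, hN⟩ := hF.1.2 u (ρ g v) (ρ (g * h) w)
        set φ := (TensorProduct.mk k V (MonoidAlgebra k G)).flip
            (MonoidAlgebra.single (g * h * l) (c1 * d * e)) with hφ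
        have e1 : (smashFS F ρ).compLHS (u ⊗ₜ MonoidAlgebra.single g c1)
            (v ⊗ₜ MonoidAlgebra.single h d) (w ⊗ₜ MonoidAlgebra.single l e)
            = fun p q => φ (F.compLHS u (ρ g v) (ρ (g * h) w) p q) :=
          funext fun p => funext fun q => smash_compLHS_pure F ρ htr haut u v w g h l c1 d e p q
        have e2 : (smashFS F ρ).compRHS (u ⊗ₜ MonoidAlgebra.single g c1)
            (v ⊗ₜ MonoidAlgebra.single h d) (w ⊗ₜ MonoidAlgebra.single l e)
            = fun p q => φ (F.compRHS u (ρ g v) (ρ (g * h) w) p q) :=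
          funext fun p => funext fun q => smash_compRHS_pure F ρ haut u v w g h l c1 d e p q
        refine ⟨N, fun p q => ?_⟩
        rw [e1, e2, zwMul_map φ, zwMul_map φ, hN p q]

end SmashAssoc

section SmashLocal
set_option linter.unusedSectionVars false
variable {k : Type*} [CommRing k] {V : Type*} [AddCommGroup V] [Module k V]
variable {G : Type*} [Group G] [DecidableEq G]
variable (F : VAData k V) (ρ : G →* (V ≃ₗ[k] V))

lemma prodZW_add₁ {W : Type*} [AddCommGroup W] [Module k W] (F' : VAData k W)
    (a a' b c : W) (p q : ℤ) :
    F'.prodZW (a + a') b c p q = F'.prodZW a b c p q + F'.prodZW a' b c p q := by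
  simp [VAData.prodZW]

lemma prodZW_add₂ {W : Type*} [AddCommGroup W] [Module k W] (F' : VAData k W)
    (a b b' c : W) (p q : ℤ) :
    F'.prodZW a (b + b') c p q = F'.prodZW a b c p q + F'.prodZW a b' c p q := by
  simp [VAData.prodZW]

lemma prodZW_add₃ {W : Type*} [AddCommGroup W] [Module k W] (F' : VAData k W)
    (a b c c' : W) (p q : ℤ) :
    F'.prodZW a b (c + c') p q = F'.prodZW a b c p q + F'.prodZW a b c' p q := by
  simp [VAData.prodZW]

lemma prodWZ_add₃ {W : Type*} [AddCommGroup W] [Module k W] (F' : VAData k W)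
    (a b c c' : W) (p q : ℤ) :
    F'.prodWZ a b (c + c') p q = F'.prodWZ a b c p q + F'.prodWZ a b c' p q := by
  simp [VAData.prodWZ]

lemma prodZW_zero₁ {W : Type*} [AddCommGroup W] [Module k W] (F' : VAData k W)
    (b c : W) (p q : ℤ) : F'.prodZW 0 b c p q = 0 := by
  simp [VAData.prodZW]

lemma prodZW_zero₂ {W : Type*} [AddCommGroup W] [Module k W] (F' : VAData k W)
    (a c : W) (p q : ℤ) : F'.prodZW a 0 c p q = 0 := by
  simp [VAData.prodZW]

lemma prodZW_zero₃ {W : Type*} [AddCommGroup W] [Module k W] (F' : VAData k W)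
    (a b : W) (p q : ℤ) : F'.prodZW a b 0 p q = 0 := by
  simp [VAData.prodZW]

lemma prodWZ_zero₃ {W : Type*} [AddCommGroup W] [Module k W] (F' : VAData k W)
    (a b : W) (p q : ℤ) : F'.prodWZ a b 0 p q = 0 := by
  simp [VAData.prodWZ]

lemma smash_slocal_pure (hF : F.IsVertexAlgebra) (haut : ∀ g : G, IsVAAut F (ρ g))
    (u v : V) (g h : G) (c d : k) :
    ∃ n : ℕ, ∀ (cc : V ⊗[k] MonoidAlgebra k G) (p q : ℤ),
      zwMul n ((smashFS F ρ).prodZW (u ⊗ₜ MonoidAlgebra.single g c)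
        (v ⊗ₜ MonoidAlgebra.single h d) cc) p q
      = zwMul n ((smashFS F ρ).prodWZ
          ((ρ h⁻¹ u) ⊗ₜ MonoidAlgebra.single (h⁻¹ * g * h) c)
          ((ρ g v) ⊗ₜ MonoidAlgebra.single h d) cc) p q := by
  obtain ⟨n, hn⟩ := hF.2 u (ρ g v)
  refine ⟨n, ?_⟩
  intro cc
  induction cc using tensorInd with
  | h0 =>
    intro p q
    rw [zwMul_zero_fn (prodZW_zero₃ (smashFS F ρ) _ _),
      zwMul_zero_fn (prodWZ_zero₃ (smashFS F ρ) _ _)]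
  | hadd x y hx hy =>
    intro p q
    have e1 : (smashFS F ρ).prodZW (u ⊗ₜ MonoidAlgebra.single g c)
        (v ⊗ₜ MonoidAlgebra.single h d) (x + y) = fun p q =>
        (smashFS F ρ).prodZW _ _ x p q + (smashFS F ρ).prodZW _ _ y p q :=
      funext fun p => funext fun q => prodZW_add₃ _ _ _ x y p q
    have e2 : (smashFS F ρ).prodWZ ((ρ h⁻¹ u) ⊗ₜ MonoidAlgebra.single (h⁻¹ * g * h) c)
        ((ρ g v) ⊗ₜ MonoidAlgebra.single h d) (x + y) = fun p q =>
        (smashFS F ρ).prodWZ _ _ x p q + (smashFS F ρ).prodWZ _ _ y p q :=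
      funext fun p => funext fun q => prodWZ_add₃ _ _ _ x y p q
    rw [e1, e2, zwMul_add, zwMul_add, hx p q, hy p q]
  | hp w l e =>
    set φ := (TensorProduct.mk k V (MonoidAlgebra k G)).flip
        (MonoidAlgebra.single (g * h * l) (c * d * e)) with hφ
    have hφa : ∀ x : V, φ x = x ⊗ₜ MonoidAlgebra.single (g * h * l) (c * d * e) := fun x => rfl
    have eZW : (smashFS F ρ).prodZW (u ⊗ₜ MonoidAlgebra.single g c)
        (v ⊗ₜ MonoidAlgebra.single h d) (w ⊗ₜ MonoidAlgebra.single l e)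
        = fun p q => φ (F.prodZW u (ρ g v) (ρ (g * h) w) p q) := by
      funext p q
      show (smashFS F ρ).Y _ (-p-1) ((smashFS F ρ).Y _ (-q-1) _) = _
      rw [smashY_smashY F ρ haut, hφa]
      rfl
    have eWZ : (smashFS F ρ).prodWZ ((ρ h⁻¹ u) ⊗ₜ MonoidAlgebra.single (h⁻¹ * g * h) c)
        ((ρ g v) ⊗ₜ MonoidAlgebra.single h d) (w ⊗ₜ MonoidAlgebra.single l e)
        = fun p q => φ (F.prodWZ u (ρ g v) (ρ (g * h) w) p q) := by
      funext p q
      show (smashFS F ρ).Y _ (-q-1) ((smashFS F ρ).Y _ (-p-1) _) = _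
      rw [smashY_smashY F ρ haut, hφa]
      have h1 : (ρ h) ((ρ h⁻¹) u) = u := by
        rw [show (ρ h) ((ρ h⁻¹) u) = (ρ (h * h⁻¹)) u from (by rw [map_mul]; rfl),
          mul_inv_cancel, map_one]
        rfl
      have h2 : h * (h⁻¹ * g * h) = g * h := by group
      have h4 : d * c * e = c * d * e := by ring
      rw [h1, h2, h4]
      rfl
    intro p q
    rw [eZW, eWZ, zwMul_map φ, zwMul_map φ, hn (ρ (g * h) w) p q]

lemma smash_slocal (hF : F.IsVertexAlgebra) (haut : ∀ g : G, IsVAAut F (ρ g)) :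
    ∀ a b : V ⊗[k] MonoidAlgebra k G, (smashFS F ρ).IsSLocalPair a b := by
  intro a b
  induction a using tensorInd with
  | h0 =>
    refine ⟨0, 0, Fin.elim0, Fin.elim0, fun c p q => ?_⟩
    rw [zwMul_zero_fn (prodZW_zero₁ (smashFS F ρ) b c)]
    simp
  | hadd x y hx hy =>
    obtain ⟨n₁, m₁, A₁, B₁, h₁⟩ := hx
    obtain ⟨n₂, m₂, A₂, B₂, h₂⟩ := hy
    refine ⟨max n₁ n₂, m₁ + m₂, Fin.append A₁ A₂, Fin.append B₁ B₂, fun c p q => ?_⟩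
    have e : (smashFS F ρ).prodZW (x + y) b c = fun p q =>
        (smashFS F ρ).prodZW x b c p q + (smashFS F ρ).prodZW y b c p q :=
      funext fun p => funext fun q => prodZW_add₁ _ x y b c p q
    rw [e, zwMul_add, zwEq_congr_le (le_max_left n₁ n₂) (h₁ c) p q,
      zwEq_congr_le (le_max_right n₁ n₂) (h₂ c) p q, Fin.sum_univ_add]
    simp only [Fin.append_left, Fin.append_right]
  | hp u g c1 =>
    induction b using tensorInd with
    | h0 =>
      refine ⟨0, 0, Fin.elim0, Fin.elim0, fun c p q => ?_⟩
      rw [zwMul_zero_fn (prodZW_zero₂ (smashFS F ρ) _ c)]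
      simp
    | hadd x y hx hy =>
      obtain ⟨n₁, m₁, A₁, B₁, h₁⟩ := hx
      obtain ⟨n₂, m₂, A₂, B₂, h₂⟩ := hy
      refine ⟨max n₁ n₂, m₁ + m₂, Fin.append A₁ A₂, Fin.append B₁ B₂, fun c p q => ?_⟩
      have e : (smashFS F ρ).prodZW (u ⊗ₜ MonoidAlgebra.single g c1) (x + y) c = fun p q =>
          (smashFS F ρ).prodZW _ x c p q + (smashFS F ρ).prodZW _ y c p q :=
        funext fun p => funext fun q => prodZW_add₂ _ _ x y c p q
      rw [e, zwMul_add, zwEq_congr_le (le_max_left n₁ n₂) (h₁ c) p q,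
        zwEq_congr_le (le_max_right n₁ n₂) (h₂ c) p q, Fin.sum_univ_add]
      simp only [Fin.append_left, Fin.append_right]
    | hp v h d =>
      obtain ⟨n, hn⟩ := smash_slocal_pure F ρ hF haut u v g h c1 d
      refine ⟨n, 1, fun _ => (ρ h⁻¹ u) ⊗ₜ MonoidAlgebra.single (h⁻¹ * g * h) c1,
        fun _ => (ρ g v) ⊗ₜ MonoidAlgebra.single h d, fun c p q => ?_⟩
      rw [hn c p q, Fin.sum_univ_one]

end SmashLocal

section Alpha
set_option linter.unusedSectionVars false
variable {k : Type*} [CommRing k] {V : Type*} [AddCommGroup V] [Module k V]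
variable {G : Type*} [Group G] [DecidableEq G]

noncomputable def diagLin (f : G → k) : Module.End k (MonoidAlgebra k G) :=
  (Finsupp.lsum k fun g => LinearMap.toSpanSingleton k (MonoidAlgebra k G)
    (f g • MonoidAlgebra.single g (1 : k))) ∘ₗ (MonoidAlgebra.coeffLinearEquiv k).toLinearMap

lemma diagLin_single (f : G → k) (g : G) (c : k) :
    diagLin f (MonoidAlgebra.single g c) = (f g * c) • MonoidAlgebra.single g 1 := by
  unfold diagLin
  simp only [LinearMap.coe_comp, Function.comp_apply, LinearEquiv.coe_coe, MonoidAlgebra.coeffLinearEquiv_apply, MonoidAlgebra.coeff_single]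
  erw [Finsupp.lsum_single, LinearMap.toSpanSingleton_apply]
  rw [smul_smul, mul_comm]

/-- The diagonal action of `G → k` (the dual of `kG`) on `kG`. -/
noncomputable def diagEnd : (G → k) →ₐ[k] Module.End k (MonoidAlgebra k G) where
  toFun f := diagLin f
  map_one' := by
    apply maLhomExt
    intro g c
    show diagLin 1 (MonoidAlgebra.single g c) = (1 : Module.End k (MonoidAlgebra k G)) (MonoidAlgebra.single g c)
    rw [diagLin_single, Module.End.one_apply, Pi.one_apply, one_mul]
    rw [MonoidAlgebra.smul_single, smul_eq_mul, mul_one]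
  map_mul' f f' := by
    apply maLhomExt
    intro g c
    show diagLin (f * f') (MonoidAlgebra.single g c) = diagLin f (diagLin f' (MonoidAlgebra.single g c))
    rw [diagLin_single, diagLin_single, map_smul, diagLin_single, smul_smul, Pi.mul_apply]
    congr 1
    ring
  map_zero' := by
    apply maLhomExt
    intro g c
    show diagLin 0 (MonoidAlgebra.single g c) = (0 : Module.End k (MonoidAlgebra k G)) (MonoidAlgebra.single g c)
    rw [diagLin_single, LinearMap.zero_apply, Pi.zero_apply, zero_mul, zero_smul]
  map_add' f f' := by
    apply maLhomExt
    intro g c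
    show diagLin (f + f') (MonoidAlgebra.single g c)
        = diagLin f (MonoidAlgebra.single g c) + diagLin f' (MonoidAlgebra.single g c)
    rw [diagLin_single, diagLin_single, diagLin_single, Pi.add_apply, add_mul, add_smul]
  commutes' c := by
    apply maLhomExt
    intro g d
    show diagLin (algebraMap k (G → k) c) (MonoidAlgebra.single g d)
        = algebraMap k (Module.End k (MonoidAlgebra k G)) c (MonoidAlgebra.single g d)
    rw [diagLin_single, Module.algebraMap_end_apply, Pi.algebraMap_apply,
      Algebra.algebraMap_self, RingHom.id_apply]
    rw [MonoidAlgebra.smul_single, MonoidAlgebra.smul_single, smul_eq_mul, smul_eq_mul, mul_one]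

lemma diagEnd_single (f : G → k) (g : G) (c : k) :
    diagEnd f (MonoidAlgebra.single g c) = f g • MonoidAlgebra.single g c := by
  show diagLin f (MonoidAlgebra.single g c) = _
  rw [diagLin_single, ← smul_smul, MonoidAlgebra.smul_single, smul_eq_mul, mul_one]

/-- The action of the dual Hopf algebra `(kG)* = G → k` on the smash product. -/
noncomputable def alphaMap : (G → k) →ₐ[k] Module.End k (V ⊗[k] MonoidAlgebra k G) where
  toFun f := TensorProduct.map LinearMap.id (diagEnd f)
  map_one' := by
    apply TensorProduct.ext'
    intro x y
    simp [TensorProduct.map_tmul]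
  map_mul' f f' := by
    apply TensorProduct.ext'
    intro x y
    simp [TensorProduct.map_tmul, Module.End.mul_apply, map_mul]
  map_zero' := by
    apply TensorProduct.ext'
    intro x y
    simp [TensorProduct.map_tmul]
  map_add' f f' := by
    apply TensorProduct.ext'
    intro x y
    simp [TensorProduct.map_tmul, map_add, TensorProduct.tmul_add]
  commutes' c := by
    apply TensorProduct.ext'
    intro x y
    simp only [TensorProduct.map_tmul, LinearMap.id_apply, AlgHom.commutes,
      Module.algebraMap_end_apply, TensorProduct.tmul_smul]

lemma alphaMap_tmul_single (f : G → k) (u : V) (g : G) (c : k) :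
    (alphaMap (V := V) f) (u ⊗ₜ[k] MonoidAlgebra.single g c)
      = f g • (u ⊗ₜ[k] MonoidAlgebra.single g c) := by
  show TensorProduct.map LinearMap.id (diagEnd f) (u ⊗ₜ MonoidAlgebra.single g c) = _
  rw [TensorProduct.map_tmul, diagEnd_single, LinearMap.id_apply, TensorProduct.tmul_smul]

end Alpha

end HopfVA

namespace HopfVA

/-- Let `V` be an `H`-module vertex algebra where `H = kG` is the
group algebra of a finite subgroup `G` of `Aut(V)` (given by a faithful action `ρ` by
vertex algebra automorphisms), and let `H*` (realized as `G → k` with pointwise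
operations, with basis `ρ_g = Pi.single g 1`) be the dual Hopf algebra.  Then on the
smash product `V#H`: (i) `V#H` is a left `H*`-module via `ρ_h(a#g) = δ_{h,g}·a#g`;
(ii) `f(Y^{V#H}(u#g,z)(v#h)) = ∑ Y^{V#H}(f₁(u#g),z)(f₂(v#h))`, where
`Δ(ρ_x) = ∑_y ρ_{xy⁻¹} ⊗ ρ_y`.  Consequently `V#H` is an `H*`-module `S`-local vertex
algebra. -/
theorem statement10 {k : Type*} [Field k] [CharZero k]
    {V : Type*} [AddCommGroup V] [Module k V]
    {G : Type*} [Group G] [Fintype G] [DecidableEq G]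
    (F : VAData k V) (hF : F.IsVertexAlgebra)
    (ρ : G →* (V ≃ₗ[k] V)) (hinj : Function.Injective ρ)
    (haut : ∀ g : G, IsVAAut F (ρ g)) :
    ∃ FS : VAData k (V ⊗[k] MonoidAlgebra k G),
      -- the smash product structure
      (∀ (a b : V) (g h : G) (n : ℤ),
        FS.Y (a ⊗ₜ[k] MonoidAlgebra.single g (1 : k)) n
             (b ⊗ₜ[k] MonoidAlgebra.single h (1 : k))
          = (F.Y a n (ρ g b) : V) ⊗ₜ[k] MonoidAlgebra.single (g * h) (1 : k)) ∧
      FS.vac = F.vac ⊗ₜ[k] (1 : MonoidAlgebra k G) ∧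
      (∀ (a : V) (x : MonoidAlgebra k G), FS.T (a ⊗ₜ[k] x) = (F.T a : V) ⊗ₜ[k] x) ∧
      -- (i) the H*-module structure
      (∃ α : (G → k) →ₐ[k] Module.End k (V ⊗[k] MonoidAlgebra k G),
        (∀ (h g : G) (u : V),
          α (Pi.single h 1) (u ⊗ₜ[k] MonoidAlgebra.single g (1 : k))
            = if h = g then u ⊗ₜ[k] MonoidAlgebra.single g (1 : k) else 0) ∧
        -- (ii) compatibility with the comultiplication of H*
        (∀ (x : G) (u v : V) (g h : G) (n : ℤ),
          α (Pi.single x 1)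
              (FS.Y (u ⊗ₜ[k] MonoidAlgebra.single g (1 : k)) n
                    (v ⊗ₜ[k] MonoidAlgebra.single h (1 : k)))
            = ∑ y : G,
                FS.Y (α (Pi.single (x * y⁻¹) 1)
                        (u ⊗ₜ[k] MonoidAlgebra.single g (1 : k))) n
                     (α (Pi.single y 1)
                        (v ⊗ₜ[k] MonoidAlgebra.single h (1 : k))))) ∧
      -- consequence: V#H is an S-local vertex algebra
      FS.IsSLocalVA := by
  classical
  refine ⟨smashFS F ρ, fun a b g h n => by rw [smashY_tmul, one_mul], rfl, fun a x => rfl,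
    ⟨alphaMap, ?_, ?_⟩,
    ⟨⟨smash_isStateField F ρ hF.1.1 haut, smash_assoc F ρ hF haut⟩, smash_slocal F ρ hF haut⟩⟩
  · intro h g u
    rw [alphaMap_tmul_single]
    by_cases hgh : h = g
    · subst hgh
      simp [Pi.single_eq_same]
    · rw [Pi.single_eq_of_ne (Ne.symm hgh)]
      simp [hgh]
  · intro x u v g h n
    rw [smashY_tmul, one_mul, alphaMap_tmul_single]
    have hterm : ∀ y : G,
        (smashFS F ρ).Y ((alphaMap (V := V) (Pi.single (x * y⁻¹) 1))
            (u ⊗ₜ[k] MonoidAlgebra.single g (1 : k))) n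
          ((alphaMap (V := V) (Pi.single y 1)) (v ⊗ₜ[k] MonoidAlgebra.single h (1 : k)))
        = ((Pi.single (M := fun _ => k) (x * y⁻¹) 1 g * Pi.single (M := fun _ => k) y 1 h : k)) •
            ((F.Y u n (ρ g v) ⊗ₜ[k] MonoidAlgebra.single (g * h) (1 : k)) :
              V ⊗[k] MonoidAlgebra k G) := by
      intro y
      rw [alphaMap_tmul_single, alphaMap_tmul_single]
      simp only [map_smul, Pi.smul_apply, LinearMap.smul_apply]
      rw [smashY_tmul, one_mul, smul_smul, mul_comm]
    rw [Finset.sum_congr rfl (fun y _ => hterm y), ← Finset.sum_smul]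
    congr 1
    simp only [Pi.single_apply, mul_ite, ite_mul, one_mul, mul_one, zero_mul, mul_zero]
    rw [Finset.sum_ite_eq]
    simp only [Finset.mem_univ, if_true]
    by_cases hx : g * h = x
    · rw [if_pos hx, if_pos]
      rw [← hx, mul_inv_cancel_right]
    · rw [if_neg hx, if_neg]
      intro H
      exact hx (by rw [H, inv_mul_cancel_right])

end HopfVA
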